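/- Let k ≥ 2 and p ≥ 2^{32(k log_2(16k))^2}. Then p is (k,k)-constructible in at most (10/k) · log_2(p)/log_2 log_2(p) steps. -/

import Mathlib

/-- The ℓ1-norm of a multivariate integer polynomial. -/
noncomputable def l1Norm {n : ℕ} (f : MvPolynomial (Fin n) ℤ) : ℕ :=
  ∑ m ∈ f.support, (f.coeff m).natAbs

/-- A natural number `r` is `(k,t)`-constructible in at most `n` steps if there is a
sequence of naturals `0 = a 0, a 1, …, a m = r` with `m ≤ n` such that each `a i`
(`1 ≤ i ≤ m`) is the value at `(a 0, …, a (i-1))` of an integer polynomial of degree at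
most `t` and ℓ1-norm at most `k`. -/
def Constructible (k t n r : ℕ) : Prop :=
  ∃ m ≤ n, ∃ a : ℕ → ℕ, a 0 = 0 ∧ a m = r ∧
    ∀ i, 1 ≤ i → i ≤ m →
      ∃ f : MvPolynomial (Fin i) ℤ, f.totalDegree ≤ t ∧ l1Norm f ≤ k ∧
        MvPolynomial.aeval (fun j : Fin i => (a j : ℤ)) f = (a i : ℤ)

/-!
Write `p` in base `B = b ^ (k - 1)` and evaluate it by Horner's rule `x ↦ B * x + d`. A base-`B`
digit `d` is the sum of the `k - 1` products `dⱼ * b ^ j` of its base-`b` digits with powers of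
`b`, so once `0, 1, …, b` and `b², …, b ^ (k - 1)` are available (`b + k - 2` steps), every Horner
step is a sum of `k` products of earlier terms: a polynomial of degree `2` and ℓ1-norm `k`.
With `λ = ⌊log₂ p⌋`, `l = ⌊log₂ λ⌋` and `b = 2 ^ m`, `m = l / 4 + 1`, the Horner phase takes
`λ / (m (k - 1)) + 1 ≤ 8 λ / (k (l + 1)) + 1` steps, and the hypothesis on `p` gives
`b ≤ λ / (k (l + 1))` and `k ≤ λ / (k (l + 1))`, which bound the remaining `b + k - 1` steps by
`2 λ / (k (l + 1))`.
-/

open MvPolynomial Finset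

section L1Norm

variable {n : ℕ}

lemma l1Norm_eq_sum_of_support_subset {f : MvPolynomial (Fin n) ℤ} {s : Finset (Fin n →₀ ℕ)}
    (h : f.support ⊆ s) : l1Norm f = ∑ m ∈ s, (f.coeff m).natAbs :=
  sum_subset h fun m _ hm => by simp [notMem_support_iff.mp hm]

lemma l1Norm_add_le (f g : MvPolynomial (Fin n) ℤ) : l1Norm (f + g) ≤ l1Norm f + l1Norm g := by
  classical
  rw [l1Norm_eq_sum_of_support_subset support_add,
    l1Norm_eq_sum_of_support_subset (subset_union_left (s₂ := g.support)),
    l1Norm_eq_sum_of_support_subset (subset_union_right (s₁ := f.support)), ← sum_add_distrib]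
  exact sum_le_sum fun m _ => by rw [coeff_add]; exact Int.natAbs_add_le _ _

lemma l1Norm_monomial (s : Fin n →₀ ℕ) (c : ℤ) : l1Norm (monomial s c) = c.natAbs := by
  classical
  rcases eq_or_ne c 0 with rfl | hc
  · simp [l1Norm]
  · simp [l1Norm, support_monomial, hc]

lemma l1Norm_X_mul_X (u v : Fin n) : l1Norm (X u * X v : MvPolynomial (Fin n) ℤ) = 1 := by
  rw [X, X, monomial_mul, l1Norm_monomial, mul_one, Int.natAbs_one]

end L1Norm

lemma exists_l1Norm_le_eval_eq_sum_mul {n c : ℕ} (u v : Fin c → Fin n) :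
    ∃ f : MvPolynomial (Fin n) ℤ, f.totalDegree ≤ 2 ∧ l1Norm f ≤ c ∧
      ∀ x : Fin n → ℤ, aeval x f = ∑ j, x (u j) * x (v j) := by
  refine ⟨∑ j, X (u j) * X (v j), ?_, ?_, fun x => by simp⟩
  · refine (totalDegree_finsetSum _ _).trans (Finset.sup_le fun j _ => ?_)
    exact (totalDegree_mul _ _).trans (by simp [totalDegree_X])
  · refine (le_sum_of_subadditive l1Norm (by simp [l1Norm]) l1Norm_add_le _ _).trans ?_
    simp [l1Norm_X_mul_X]

def IsSumOfProducts (k : ℕ) (a : ℕ → ℕ) (i : ℕ) : Prop :=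
  ∃ c ≤ k, ∃ u v : Fin c → Fin i, a i = ∑ j, a (u j) * a (v j)

lemma constructible_of_isSumOfProducts {k t m : ℕ} (hk : 1 ≤ k) (ht : 2 ≤ t) {a : ℕ → ℕ}
    (h0 : a 0 = 0) (h1 : a 1 = 1) (hstep : ∀ i, 2 ≤ i → i ≤ m → IsSumOfProducts k a i) :
    Constructible k t m (a m) := by
  refine ⟨m, le_rfl, a, h0, rfl, fun i hi him => ?_⟩
  obtain rfl | hi := hi.eq_or_lt
  · refine ⟨C 1, by simp, ?_, by simp [h1]⟩
    rw [C_apply, l1Norm_monomial]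
    simpa using hk
  · obtain ⟨c, hc, u, v, hai⟩ := hstep i hi him
    obtain ⟨f, hdeg, hnorm, heval⟩ := exists_l1Norm_le_eval_eq_sum_mul u v
    exact ⟨f, hdeg.trans ht, hnorm.trans hc, by rw [heval, hai]; push_cast; rfl⟩

lemma sum_div_pow_mod_mul_pow {b n x : ℕ} (hx : x < b ^ n) :
    ∑ j ∈ range n, x / b ^ j % b * b ^ j = x := by
  induction n generalizing x with
  | zero => simp_all
  | succ n ih =>
    have hb : 0 < b := Nat.pos_of_ne_zero fun h => by simp [h] at hx
    have hxb : x / b < b ^ n := Nat.div_lt_of_lt_mul (by rwa [← pow_succ'])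
    calc ∑ j ∈ range (n + 1), x / b ^ j % b * b ^ j
        = b * ∑ j ∈ range n, x / b / b ^ j % b * b ^ j + x % b := by
          rw [sum_range_succ', mul_sum]
          simp only [pow_succ', Nat.div_div_eq_div_mul, pow_zero, Nat.div_one, mul_one]
          congr 1
          exact sum_congr rfl fun j _ => by ring
      _ = x := by rw [ih hxb, Nat.div_add_mod]

/-- The terms `0, 1, …, b`, then the powers `b², …, b ^ (k - 1) = B`, then the quotients
`p / B ^ (L - 1), …, p / B, p`, each obtained from the previous one by Horner's rule in base `B`,
the base-`B` digit being written in base `b`. -/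
def hornerSeq (b k p L i : ℕ) : ℕ :=
  if i ≤ b then i
  else if i ≤ b + (k - 2) then b ^ (i - b + 1)
  else p / (b ^ (k - 1)) ^ (b + (k - 2) + L - i)

section HornerSeq

variable {b k p L i : ℕ}

lemma hornerSeq_of_le (h : i ≤ b) : hornerSeq b k p L i = i := if_pos h

lemma hornerSeq_eq_pow (h₁ : b ≤ i) (h₂ : i ≤ b + (k - 2)) :
    hornerSeq b k p L i = b ^ (i - b + 1) := by
  unfold hornerSeq
  split_ifs with h
  · obtain rfl : i = b := le_antisymm h h₁
    simp
  · rfl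

lemma hornerSeq_eq_div (h : b + (k - 2) < i) :
    hornerSeq b k p L i = p / (b ^ (k - 1)) ^ (b + (k - 2) + L - i) := by
  unfold hornerSeq
  rw [if_neg (by omega), if_neg (by omega)]

lemma hornerSeq_powerIndex (hb : 1 ≤ b) {j : ℕ} (hj : j < k - 1) :
    hornerSeq b k p L (if j = 0 then 1 else b + j - 1) = b ^ j := by
  split_ifs with h
  · rw [hornerSeq_of_le hb, h, pow_zero]
  · rw [hornerSeq_eq_pow (by omega) (by omega)]
    congr 1
    omega

lemma isSumOfProducts_hornerSeq_of_le (hk : 2 ≤ k) (hi : 2 ≤ i) (hib : i ≤ b) :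
    IsSumOfProducts k (hornerSeq b k p L) i := by
  refine ⟨2, hk, ![⟨i - 1, by omega⟩, ⟨1, by omega⟩], ![⟨1, by omega⟩, ⟨1, by omega⟩], ?_⟩
  simp only [Fin.sum_univ_two, Matrix.cons_val_zero, Matrix.cons_val_one]
  rw [hornerSeq_of_le hib, hornerSeq_of_le (by omega : i - 1 ≤ b), hornerSeq_of_le (by omega)]
  omega

lemma isSumOfProducts_hornerSeq_of_pow (hk : 1 ≤ k) (hbi : b < i) (hi : i ≤ b + (k - 2)) :
    IsSumOfProducts k (hornerSeq b k p L) i := by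
  refine ⟨1, hk, ![⟨i - 1, by omega⟩], ![⟨b, hbi⟩], ?_⟩
  simp only [Fin.sum_univ_one, Matrix.cons_val_zero]
  rw [hornerSeq_eq_pow hbi.le hi, hornerSeq_eq_pow (by omega) (by omega), hornerSeq_of_le le_rfl,
    ← pow_succ]
  congr 1
  omega

lemma isSumOfProducts_hornerSeq_of_div (hk : 2 ≤ k) (hb : 1 ≤ b) (hp : p < (b ^ (k - 1)) ^ L)
    (hqi : b + (k - 2) < i) (hi : i ≤ b + (k - 2) + L) :
    IsSumOfProducts k (hornerSeq b k p L) i := by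
  set B := b ^ (k - 1)
  set q := b + (k - 2)
  set x := p / B ^ (q + L - i)
  set digit : ℕ → ℕ := fun j => x % B / b ^ j % b
  have hdigit (j : ℕ) : digit j < b := Nat.mod_lt _ hb
  -- `x / B` is the term before `x`, except when `x` is the leading digit: then it is the term `0`
  have hprev : hornerSeq b k p L (if i = q + 1 then 0 else i - 1) = x / B := by
    rw [Nat.div_div_eq_div_mul, ← pow_succ]
    split_ifs with h
    · rw [hornerSeq_of_le (Nat.zero_le _), eq_comm, Nat.div_eq_zero_iff_lt (by positivity)]
      convert hp using 2
      omega
    · rw [hornerSeq_eq_div (by omega)]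
      congr 2
      omega
  refine ⟨k - 1 + 1, by omega,
    Fin.cons ⟨if i = q + 1 then 0 else i - 1, by split_ifs <;> omega⟩
      fun j => ⟨digit j, by have := hdigit j; omega⟩,
    Fin.cons ⟨q, hqi⟩ fun j => ⟨if (j : ℕ) = 0 then 1 else b + j - 1, by split_ifs <;> omega⟩, ?_⟩
  rw [Fin.sum_univ_succ]
  simp only [Fin.cons_zero, Fin.cons_succ]
  rw [hprev, hornerSeq_eq_pow (by omega) le_rfl, hornerSeq_eq_div hqi,
    show q - b + 1 = k - 1 by omega]
  have hdigits : ∑ j : Fin (k - 1), hornerSeq b k p L (digit j) *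
      hornerSeq b k p L (if (j : ℕ) = 0 then 1 else b + j - 1) = x % B := by
    simp only [hornerSeq_of_le (hdigit _).le, hornerSeq_powerIndex hb (Fin.is_lt _)]
    rw [Fin.sum_univ_eq_sum_range (fun j => digit j * b ^ j),
      sum_div_pow_mod_mul_pow (Nat.mod_lt _ (by positivity))]
  rw [hdigits]
  exact (Nat.div_add_mod' x B).symm

end HornerSeq

theorem constructible_of_lt_pow {k t b p L : ℕ} (hk : 2 ≤ k) (ht : 2 ≤ t) (hb : 1 ≤ b)
    (hL : 0 < L) (hp : p < (b ^ (k - 1)) ^ L) : Constructible k t (b + (k - 2) + L) p := by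
  have h := constructible_of_isSumOfProducts (k := k) (m := b + (k - 2) + L)
    (a := hornerSeq b k p L) (by omega) ht
    (hornerSeq_of_le (Nat.zero_le _)) (hornerSeq_of_le hb) fun i hi₁ hi₂ => by
      rcases le_or_gt i b with hib | hbi
      · exact isSumOfProducts_hornerSeq_of_le hk hi₁ hib
      rcases le_or_gt i (b + (k - 2)) with hiq | hqi
      · exact isSumOfProducts_hornerSeq_of_pow (by omega) hbi hiq
      · exact isSumOfProducts_hornerSeq_of_div hk hb hp hqi hi₂
  rwa [hornerSeq_eq_div (by omega), Nat.sub_self, pow_zero, Nat.div_one] at h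

lemma two_pow_log_div_four_mul_le {k n : ℕ} (h : 64 * k ^ 2 ≤ n) :
    2 ^ (Nat.log 2 n / 4 + 1) * (k * (Nat.log 2 n + 1)) ≤ n := by
  rcases Nat.eq_zero_or_pos n with rfl | hn
  · obtain rfl : k = 0 := by nlinarith
    simp
  set l := Nat.log 2 n
  set q := l / 4
  have hl : l + 1 ≤ 4 * 2 ^ q := by
    have := Nat.lt_two_pow_self (n := q)
    omega
  have h4q : 2 ^ (4 * q) ≤ n :=
    (Nat.pow_le_pow_right two_pos (by omega)).trans (Nat.pow_log_le_self 2 hn.ne')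
  have hsq : (8 * k * (2 ^ q) ^ 2) * (8 * k * (2 ^ q) ^ 2) ≤ n * n :=
    calc _ = 64 * k ^ 2 * 2 ^ (4 * q) := by ring
      _ ≤ n * n := Nat.mul_le_mul h h4q
  calc 2 ^ (q + 1) * (k * (l + 1)) ≤ 2 ^ (q + 1) * (k * (4 * 2 ^ q)) := by gcongr
    _ = 8 * k * (2 ^ q) ^ 2 := by ring
    _ ≤ n := Nat.mul_self_le_mul_self_iff.1 hsq

lemma sq_mul_log_succ_le {k n : ℕ} (h : 32 * (k * (4 + Nat.log 2 k)) ^ 2 ≤ n) :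
    k ^ 2 * (Nat.log 2 n + 1) ≤ n := by
  rcases Nat.eq_zero_or_pos k with rfl | hk
  · simp
  set g := Nat.log 2 k
  set l := Nat.log 2 n
  by_cases hl : l + 1 ≤ 32 * (4 + g) ^ 2
  · calc k ^ 2 * (l + 1) ≤ k ^ 2 * (32 * (4 + g) ^ 2) := by gcongr
      _ = 32 * (k * (4 + g)) ^ 2 := by ring
      _ ≤ n := h
  -- otherwise `l = 2g + 3 + d` with `d` so large that `l + 1 ≤ 2 ^ (d + 1)`, and `k² ≤ 2 ^ (2g + 2)`
  have hn : n ≠ 0 := (lt_of_lt_of_le (by positivity) h).ne'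
  have hk2 : k ^ 2 ≤ 2 ^ (2 * g + 2) := by
    rw [show 2 * g + 2 = (g + 1) * 2 by ring, pow_mul]
    exact Nat.pow_le_pow_left (Nat.lt_pow_succ_log_self one_lt_two k).le 2
  have hlg : 4 * g + 5 ≤ l := by nlinarith
  obtain ⟨d, hd⟩ : ∃ d, l = 2 * g + 3 + d := ⟨l - (2 * g + 3), by omega⟩
  have hd2 := Nat.lt_two_pow_self (n := d)
  calc k ^ 2 * (l + 1) ≤ 2 ^ (2 * g + 2) * (2 * 2 ^ d) := Nat.mul_le_mul hk2 (by omega)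
    _ = 2 ^ l := by rw [hd]; ring
    _ ≤ n := Nat.pow_log_le_self 2 hn

lemma steps_mul_log_succ_le {k n : ℕ} (hk : 2 ≤ k) (h : 32 * (k * (4 + Nat.log 2 k)) ^ 2 ≤ n) :
    (2 ^ (Nat.log 2 n / 4 + 1) + (k - 2) + (n / ((Nat.log 2 n / 4 + 1) * (k - 1)) + 1)) *
      (k * (Nat.log 2 n + 1)) ≤ 10 * n := by
  set l := Nat.log 2 n
  set m := l / 4 + 1
  have h64 : 64 * k ^ 2 ≤ n :=
    calc 64 * k ^ 2 ≤ 32 * (k * 4) ^ 2 := by nlinarith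
      _ ≤ 32 * (k * (4 + Nat.log 2 k)) ^ 2 := by gcongr; omega
      _ ≤ n := h
  have hpow : 2 ^ m * (k * (l + 1)) ≤ n := two_pow_log_div_four_mul_le h64
  have hsq : (k - 2 + 1) * (k * (l + 1)) ≤ n :=
    calc _ ≤ k * (k * (l + 1)) := by gcongr; omega
      _ = k ^ 2 * (l + 1) := by ring
      _ ≤ n := sq_mul_log_succ_le h
  have hdigits : n / (m * (k - 1)) * (k * (l + 1)) ≤ 8 * n :=
    calc _ ≤ n / (m * (k - 1)) * (m * (k - 1) * 8) := by
          refine Nat.mul_le_mul_left _ ?_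
          have : k ≤ 2 * (k - 1) := by omega
          have : l + 1 ≤ 4 * m := by omega
          nlinarith
      _ ≤ 8 * n := by rw [← mul_assoc, mul_comm 8]; gcongr; exact Nat.div_mul_le_self _ _
  calc _ = 2 ^ m * (k * (l + 1)) + (k - 2 + 1) * (k * (l + 1)) +
        n / (m * (k - 1)) * (k * (l + 1)) := by ring
    _ ≤ n + n + 8 * n := add_le_add (add_le_add hpow hsq) hdigits
    _ = 10 * n := by ring

lemma le_natLog_two_of_two_rpow_le {x p : ℕ} {y : ℝ} (hxy : x ≤ y) (h : (2 : ℝ) ^ y ≤ p) :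
    x ≤ Nat.log 2 p := by
  refine Nat.le_log_of_pow_le one_lt_two (Nat.cast_le (α := ℝ).1 ?_)
  push_cast
  rw [← Real.rpow_natCast]
  exact (Real.rpow_le_rpow_of_exponent_le one_le_two hxy).trans h

lemma four_add_log_le_logb_sixteen_mul {k : ℕ} (hk : k ≠ 0) :
    4 + (Nat.log 2 k : ℝ) ≤ Real.logb 2 (16 * k) := by
  rw [Real.logb_mul (by norm_num) (by positivity), show (16 : ℝ) = 2 ^ (4 : ℕ) by norm_num,
    Real.logb_pow, Real.logb_self_eq_one one_lt_two]
  push_cast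
  have := Real.natLog_le_logb k 2
  push_cast at this
  linarith

lemma le_div_logb_logb_of_mul_le {n c d p : ℕ} (hd : 0 < d) (hp : 2 ≤ Nat.log 2 p)
    (h : n * (d * (Nat.log 2 (Nat.log 2 p) + 1)) ≤ c * Nat.log 2 p) :
    (n : ℝ) ≤ (c / d) * (Real.logb 2 p / Real.logb 2 (Real.logb 2 p)) := by
  set lam := Nat.log 2 p
  set l := Nat.log 2 lam
  have hlam : (lam : ℝ) ≤ Real.logb 2 p := by exact_mod_cast Real.natLog_le_logb p 2
  have hlam' : Real.logb 2 p < lam + 1 := by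
    have := Nat.lt_floor_add_one (Real.logb 2 p)
    rwa [show ⌊Real.logb 2 p⌋₊ = lam by exact_mod_cast Real.natFloor_logb_natCast 2 p] at this
  have hlam2 : (2 : ℝ) ≤ lam := by exact_mod_cast hp
  have hlog_pos : 0 < Real.logb 2 (Real.logb 2 p) := Real.logb_pos one_lt_two (by linarith)
  have hloglog : Real.logb 2 (Real.logb 2 p) < l + 1 := by
    rw [Real.logb_lt_iff_lt_rpow one_lt_two (by linarith), ← Nat.cast_succ, Real.rpow_natCast]
    have : lam + 1 ≤ 2 ^ (l + 1) := Nat.lt_pow_succ_log_self one_lt_two lam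
    exact hlam'.trans_le (by exact_mod_cast this)
  rw [div_mul_div_comm, le_div_iff₀ (by positivity)]
  have h' : (n : ℝ) * (d * (l + 1)) ≤ c * lam := by exact_mod_cast h
  calc (n : ℝ) * (d * Real.logb 2 (Real.logb 2 p)) ≤ n * (d * (l + 1)) := by gcongr
    _ ≤ c * lam := h'
    _ ≤ c * Real.logb 2 p := by gcongr

/-- Any `p ≥ 2^{32 (k log₂(16k))²}` with `k ≥ 2` is `(k,k)`-constructible in at most
`(10/k) · log₂ p / log₂ log₂ p` steps. -/
theorem constructible_of_large {k p : ℕ} (hk : 2 ≤ k)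
    (hp : (2 : ℝ) ^ (32 * ((k : ℝ) * Real.logb 2 (16 * (k : ℝ))) ^ 2) ≤ p) :
    ∃ n : ℕ, (n : ℝ) ≤ (10 / (k : ℝ)) * (Real.logb 2 p / Real.logb 2 (Real.logb 2 p)) ∧
      Constructible k k n p := by
  have hlog : 32 * (k * (4 + Nat.log 2 k)) ^ 2 ≤ Nat.log 2 p := by
    refine le_natLog_two_of_two_rpow_le ?_ hp
    have := four_add_log_le_logb_sixteen_mul (by omega : k ≠ 0)
    push_cast
    gcongr
  have hlog2 : 2 ≤ Nat.log 2 p :=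
    le_trans (by nlinarith [Nat.mul_le_mul hk (Nat.le_add_right 4 (Nat.log 2 k))]) hlog
  -- digits are taken in base `b = 2 ^ m`, the number is written in base `B = b ^ (k - 1)`
  set m := Nat.log 2 (Nat.log 2 p) / 4 + 1
  have hB : 1 < (2 ^ m) ^ (k - 1) := by
    rw [← pow_mul]
    exact Nat.one_lt_two_pow (Nat.mul_ne_zero (by omega) (by omega))
  have hlogB : Nat.log ((2 ^ m) ^ (k - 1)) p = Nat.log 2 p / (m * (k - 1)) := by
    rw [← pow_mul, Nat.log_pow_left]
  refine ⟨_, le_div_logb_logb_of_mul_le (by omega) hlog2 (steps_mul_log_succ_le hk hlog),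
    constructible_of_lt_pow hk hk Nat.one_le_two_pow (Nat.succ_pos _) ?_⟩
  exact hlogB ▸ Nat.lt_pow_succ_log_self hB p
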